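/- arXiv:1605.01693 — 5 statements merged into one kernel-verified Lean document; each statement's English description precedes it below -/
import Mathlib

section
/- Let f : X → Y be a map of metric spaces which is an s-local isometry (for some s > 0, the restriction of f to every open ball B(x, s) is an isometry onto B(f(x), s)), where Y is a connected metric space and X is nonempty. Then f is a covering map. -/
/-!
Distinct points of a fibre `f ⁻¹' {y}` are at distance at least `s`, so the balls of radius `s / 2`
around them are disjoint; each is mapped isometrically onto `ball y (s / 2)`, and together they
exhaust `f ⁻¹' ball y (s / 2)`. Over a point outside the range of `f` there is nothing to cover:
a point `w` whose `s`-ball meets the range lies in it, so the range is closed.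
-/

open Function Set Metric

theorem IsOpenMap.isOpen_iff_isOpen_preimage_inter {α β : Type*} [TopologicalSpace α]
    [TopologicalSpace β] {f : α → β} (hfo : IsOpenMap f) (hfc : Continuous f) {U : Set α}
    (hU : IsOpen U) {W : Set β} (hW : W ⊆ f '' U) : IsOpen W ↔ IsOpen (f ⁻¹' W ∩ U) := by
  refine ⟨fun h ↦ (h.preimage hfc).inter hU, fun h ↦ ?_⟩
  simpa only [image_preimage_inter, inter_eq_left.2 hW] using hfo _ h

structure IsLocalIsometryWith {X Y : Type*} [PseudoMetricSpace X] [PseudoMetricSpace Y]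
    (s : ℝ) (f : X → Y) : Prop where
  pos : 0 < s
  dist_eq : ∀ x, ∀ a ∈ ball x s, ∀ b ∈ ball x s, dist (f a) (f b) = dist a b
  image_ball : ∀ x, f '' ball x s = ball (f x) s

namespace IsLocalIsometryWith

section PseudoMetricSpace

variable {X Y : Type*} [PseudoMetricSpace X] [PseudoMetricSpace Y] {s : ℝ} {f : X → Y}

theorem dist_eq_of_dist_lt (hf : IsLocalIsometryWith s f) {x z : X} (h : dist z x < s) :
    dist (f z) (f x) = dist z x :=
  hf.dist_eq x z h x (mem_ball_self hf.pos)

theorem image_ball_of_le (hf : IsLocalIsometryWith s f) (x : X) {r : ℝ} (hr : r ≤ s) :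
    f '' ball x r = ball (f x) r := by
  refine Subset.antisymm ?_ fun w hw ↦ ?_
  · rintro _ ⟨z, hz, rfl⟩
    rw [mem_ball, hf.dist_eq_of_dist_lt (hz.trans_le hr)]
    exact hz
  · obtain ⟨z, hz, rfl⟩ : w ∈ f '' ball x s := hf.image_ball x ▸ ball_subset_ball hr hw
    refine ⟨z, ?_, rfl⟩
    rw [mem_ball, ← hf.dist_eq_of_dist_lt hz]
    exact hw

theorem continuous (hf : IsLocalIsometryWith s f) : Continuous f :=
  Metric.continuous_iff.2 fun x ε hε ↦ ⟨min ε s, lt_min hε hf.pos, fun z hz ↦ by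
    rw [hf.dist_eq_of_dist_lt (hz.trans_le (min_le_right _ _))]
    exact hz.trans_le (min_le_left _ _)⟩

theorem isOpenMap (hf : IsLocalIsometryWith s f) : IsOpenMap f := by
  refine fun U hU ↦ Metric.isOpen_iff.2 ?_
  rintro _ ⟨x, hx, rfl⟩
  obtain ⟨r, hr, hrU⟩ := Metric.isOpen_iff.1 hU x hx
  refine ⟨min r s, lt_min hr hf.pos, ?_⟩
  rw [← hf.image_ball_of_le x (min_le_right _ _)]
  exact image_mono ((ball_subset_ball (min_le_left _ _)).trans hrU)

theorem isClosed_range (hf : IsLocalIsometryWith s f) : IsClosed (range f) := by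
  refine isOpen_compl_iff.1 (Metric.isOpen_iff.2 fun w hw ↦ ⟨s, hf.pos, ?_⟩)
  rintro _ hw' ⟨x, rfl⟩
  rw [mem_ball_comm, ← hf.image_ball x] at hw'
  exact hw (image_subset_range _ _ hw')

theorem preimage_ball_subset_iUnion_ball_fiber (hf : IsLocalIsometryWith s f) (y : Y) :
    f ⁻¹' ball y (s / 2) ⊆ ⋃ e : f ⁻¹' {y}, ball (e : X) (s / 2) := by
  intro z hz
  rw [mem_preimage, mem_ball_comm, ← hf.image_ball_of_le z (half_le_self hf.pos.le)] at hz
  obtain ⟨e, he, rfl⟩ := hz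
  exact mem_iUnion.2 ⟨⟨e, rfl⟩, mem_ball_comm.1 he⟩

end PseudoMetricSpace

variable {X Y : Type*} [MetricSpace X] [PseudoMetricSpace Y] {s : ℝ} {f : X → Y}

theorem eq_of_dist_lt (hf : IsLocalIsometryWith s f) {a b : X} (hab : f a = f b)
    (h : dist a b < s) : a = b :=
  dist_eq_zero.1 <| by rw [← hf.dist_eq_of_dist_lt h, hab, dist_self]

theorem injOn_ball (hf : IsLocalIsometryWith s f) (x : X) : InjOn f (ball x s) :=
  fun a ha b hb hab ↦ dist_eq_zero.1 <| by rw [← hf.dist_eq x a ha b hb, hab, dist_self]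

theorem discreteTopology_fiber (hf : IsLocalIsometryWith s f) (y : Y) :
    DiscreteTopology (f ⁻¹' {y}) :=
  .of_forall_le_dist hf.pos fun a b hab ↦ not_lt.1 fun h ↦
    hab (Subtype.ext (hf.eq_of_dist_lt (a.2.trans b.2.symm) h))

theorem pairwise_disjoint_ball_fiber (hf : IsLocalIsometryWith s f) (y : Y) :
    Pairwise (Disjoint on fun e : f ⁻¹' {y} ↦ ball (e : X) (s / 2)) := by
  intro a b hab
  refine disjoint_left.2 fun z hza hzb ↦
    hab (Subtype.ext (hf.eq_of_dist_lt (a.2.trans b.2.symm) ?_))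
  calc dist (a : X) b ≤ dist z a + dist z b := dist_triangle_left _ _ _
    _ < s / 2 + s / 2 := add_lt_add hza hzb
    _ = s := add_halves s

noncomputable def trivialization (hf : IsLocalIsometryWith s f) (y : Y) (hy : y ∈ range f) :
    Bundle.Trivialization (f ⁻¹' {y}) f :=
  have : Nonempty (f ⁻¹' {y}) := let ⟨x, hx⟩ := hy; ⟨⟨x, hx⟩⟩
  have : Nonempty X := let ⟨x, _⟩ := hy; ⟨x⟩
  have := hf.discreteTopology_fiber y
  IsOpen.trivializationDiscrete (fun e : f ⁻¹' {y} ↦ ball (e : X) (s / 2)) (ball y (s / 2))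
    isOpen_ball
    (fun e _ hW ↦ hf.isOpenMap.isOpen_iff_isOpen_preimage_inter hf.continuous isOpen_ball <| by
      rwa [hf.image_ball_of_le _ (half_le_self hf.pos.le), e.2])
    (fun e ↦ (hf.injOn_ball e).mono (ball_subset_ball (half_le_self hf.pos.le)))
    (fun e ↦ by rw [SurjOn, hf.image_ball_of_le _ (half_le_self hf.pos.le), e.2])
    (hf.pairwise_disjoint_ball_fiber y) (hf.preimage_ball_subset_iUnion_ball_fiber y)

theorem isCoveringMap (hf : IsLocalIsometryWith s f) : IsCoveringMap f :=
  have := hf.discreteTopology_fiber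
  .mk' f (fun y ↦ f ⁻¹' {y})
    (fun y hy ↦ ⟨hf.trivialization y hy, mem_ball_self (half_pos hf.pos)⟩) hf.isClosed_range

end IsLocalIsometryWith

theorem sLocalIsometry_isCoveringMap_general {X Y : Type*} [MetricSpace X] [MetricSpace Y]
    (f : X → Y) (s : ℝ) (hs : 0 < s)
    (hloc : ∀ x : X,
      (∀ a ∈ Metric.ball x s, ∀ b ∈ Metric.ball x s, dist (f a) (f b) = dist a b) ∧
      f '' Metric.ball x s = Metric.ball (f x) s) :
    IsCoveringMap f :=
  IsLocalIsometryWith.isCoveringMap ⟨hs, fun x ↦ (hloc x).1, fun x ↦ (hloc x).2⟩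

/-- An `s`-local isometry from a nonempty metric space to a connected metric
space is a covering map. -/
theorem sLocalIsometry_isCoveringMap {X Y : Type*} [MetricSpace X] [MetricSpace Y]
    [Nonempty X] [ConnectedSpace Y] (f : X → Y) (s : ℝ) (hs : 0 < s)
    (hloc : ∀ x : X,
      (∀ a ∈ Metric.ball x s, ∀ b ∈ Metric.ball x s, dist (f a) (f b) = dist a b) ∧
      f '' Metric.ball x s = Metric.ball (f x) s) :
    IsCoveringMap f :=
  sLocalIsometry_isCoveringMap_general f s hs hloc
end

section
/- Let G be a topological group acting continuously by isometries on a metric space X, let H ≤ G be a closed cocompact subgroup (i.e. G = H K for some compact K ⊆ G). If the action of G on X is cobounded (there is a bounded set F ⊆ X with G·F = X) and locally bounded (every g ∈ G and x ∈ X has a neighborhood V of g with V·x bounded), then the action of H on X is cobounded. -/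
open Pointwise Bornology Metric

/-!
The translate `K • F` of a bounded fundamental set `F` for `G` by the compact set `K` is one for
`H`: it is bounded because `K` moves a point of `F` only a bounded distance and each element of
`K` is an isometry, and it is fundamental for `H` because every `g ∈ G` factors as `h * k`.
-/

theorem isBounded_smul_of_forall_isBounded_smul_singleton {M X : Type*} [SMul M X]
    [PseudoMetricSpace X] [IsIsometricSMul M X] {S : Set M} {F : Set X}
    (hS : ∀ y : X, IsBounded (S • {y})) (hF : IsBounded F) : IsBounded (S • F) := by
  obtain rfl | ⟨y, -⟩ := F.eq_empty_or_nonempty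
  · simp
  obtain ⟨r, hr⟩ := hF.subset_closedBall y
  refine (hS y).cthickening (δ := r) |>.subset ?_
  rintro _ ⟨s, hs, f, hf, rfl⟩
  refine mem_cthickening_of_dist_le _ (s • y) _ _ (Set.smul_mem_smul hs rfl) ?_
  rw [dist_smul]
  exact hr hf

theorem cocompact_subgroup_acts_coboundedly_general {G X : Type*} [Group G] [TopologicalSpace G]
    [IsTopologicalGroup G] [MetricSpace X] [MulAction G X]
    (hcont : Continuous fun p : G × X => p.1 • p.2)
    (hiso : ∀ g : G, Isometry fun x : X => g • x)
    (H : Subgroup G)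
    (K : Set G) (hK : IsCompact K) (hHK : (H : Set G) * K = Set.univ)
    (hcobounded : ∃ F : Set X, Bornology.IsBounded F ∧ ∀ x : X, ∃ g : G, ∃ y ∈ F, x = g • y) :
    ∃ F : Set X, Bornology.IsBounded F ∧ ∀ x : X, ∃ h ∈ H, ∃ y ∈ F, x = h • y := by
  obtain ⟨F, hFb, hF⟩ := hcobounded
  have : ContinuousSMul G X := ⟨hcont⟩
  have : IsIsometricSMul G X := ⟨hiso⟩
  refine ⟨K • F, isBounded_smul_of_forall_isBounded_smul_singleton
    (fun y => (hK.smul_set isCompact_singleton).isBounded) hFb, fun x => ?_⟩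
  obtain ⟨g, y, hy, rfl⟩ := hF x
  obtain ⟨h, hh, k, hk, rfl⟩ : g ∈ (H : Set G) * K := hHK ▸ Set.mem_univ g
  exact ⟨h, hh, k • y, Set.smul_mem_smul hk hy, mul_smul h k y⟩

/-- If a topological group `G` acts continuously by isometries on a metric space `X`,
the action is cobounded and locally bounded, and `H ≤ G` is a closed cocompact
subgroup (`G = H K` with `K` compact), then the action of `H` on `X` is cobounded. -/
theorem cocompact_subgroup_acts_coboundedly {G X : Type*} [Group G] [TopologicalSpace G]
    [IsTopologicalGroup G] [MetricSpace X] [MulAction G X]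
    (hcont : Continuous fun p : G × X => p.1 • p.2)
    (hiso : ∀ g : G, Isometry fun x : X => g • x)
    (H : Subgroup G) (hHclosed : IsClosed (H : Set G))
    (K : Set G) (hK : IsCompact K) (hHK : (H : Set G) * K = Set.univ)
    (hcobounded : ∃ F : Set X, Bornology.IsBounded F ∧ ∀ x : X, ∃ g : G, ∃ y ∈ F, x = g • y)
    (hlocbounded : ∀ (g : G) (x : X), ∃ V ∈ nhds g, Bornology.IsBounded ((fun h : G => h • x) '' V)) :
    ∃ F : Set X, Bornology.IsBounded F ∧ ∀ x : X, ∃ h ∈ H, ∃ y ∈ F, x = h • y :=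
  cocompact_subgroup_acts_coboundedly_general hcont hiso H K hK hHK hcobounded
end

section
/- Let G be a topological group, Γ ≤ G a finitely generated discrete subgroup, and Δ ◁ Γ a finite-index normal subgroup whose centralizer in G is trivial. If every homomorphism r : Δ → G sufficiently close to the inclusion (in the topology of pointwise convergence) equals conjugation by some element of G, then the same holds for Γ: every homomorphism r : Γ → G sufficiently close to the inclusion is conjugation by some element of G. -/
/-!
Restrict a homomorphism `r : Γ → G` close to the inclusion to `Δ`; by rigidity of `Δ`, after
conjugating by some `g` it becomes the identity on `Δ`. For `γ ∈ Γ` and `δ ∈ Δ`, applying the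
conjugated homomorphism `ψ` to `γ δ γ⁻¹ ∈ Δ` gives `ψ(γ) δ ψ(γ)⁻¹ = γ δ γ⁻¹`, so `γ⁻¹ ψ(γ)`
centralizes `Δ`, hence is trivial, and `ψ` is the inclusion on all of `Γ`.
-/

namespace Subgroup

variable {G : Type*} [Group G] {Γ Δ : Subgroup G}

theorem inv_mul_mem_centralizer_of_apply_inclusion_eq (hΔΓ : Δ ≤ Γ)
    (hnorm : ∀ γ ∈ Γ, ∀ δ ∈ Δ, γ * δ * γ⁻¹ ∈ Δ) {ψ : Γ →* G}
    (hψ : ∀ δ : Δ, ψ (inclusion hΔΓ δ) = δ) (γ : Γ) :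
    (γ : G)⁻¹ * ψ γ ∈ centralizer (Δ : Set G) := by
  rw [mem_centralizer_iff]
  intro δ hδ
  have hconj : ψ γ * δ * (ψ γ)⁻¹ = γ * δ * (γ : G)⁻¹ := by
    have h := hψ ⟨γ * δ * (γ : G)⁻¹, hnorm γ γ.2 δ hδ⟩
    have hincl : inclusion hΔΓ ⟨γ * δ * (γ : G)⁻¹, hnorm γ γ.2 δ hδ⟩
        = γ * inclusion hΔΓ ⟨δ, hδ⟩ * γ⁻¹ := rfl
    rwa [hincl, map_mul, map_mul, map_inv, hψ] at h
  calc δ * ((γ : G)⁻¹ * ψ γ) = (γ : G)⁻¹ * (γ * δ * (γ : G)⁻¹) * ψ γ := by group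
    _ = (γ : G)⁻¹ * (ψ γ * δ * (ψ γ)⁻¹) * ψ γ := by rw [hconj]
    _ = (γ : G)⁻¹ * ψ γ * δ := by group

theorem apply_eq_of_apply_inclusion_eq (hΔΓ : Δ ≤ Γ)
    (hnorm : ∀ γ ∈ Γ, ∀ δ ∈ Δ, γ * δ * γ⁻¹ ∈ Δ) (hcent : centralizer (Δ : Set G) = ⊥)
    {ψ : Γ →* G} (hψ : ∀ δ : Δ, ψ (inclusion hΔΓ δ) = δ) (γ : Γ) : ψ γ = γ := by
  have h := inv_mul_mem_centralizer_of_apply_inclusion_eq hΔΓ hnorm hψ γ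
  rwa [hcent, mem_bot, inv_mul_eq_one, eq_comm] at h

end Subgroup

theorem local_rigidity_of_finite_index_normal_general {G : Type*} [Group G] [TopologicalSpace G]
    (Γ Δ : Subgroup G)
    (hΔΓ : Δ ≤ Γ) (hnorm : ∀ γ ∈ Γ, ∀ δ ∈ Δ, γ * δ * γ⁻¹ ∈ Δ)
    (hcent : Subgroup.centralizer (Δ : Set G) = ⊥)
    (hΔrigid : ∃ 𝒰 ∈ nhds (fun δ : Δ => (δ : G)),
      ∀ r : Δ →* G, ⇑r ∈ 𝒰 → ∃ g : G, ∀ δ : Δ, r δ = g⁻¹ * (δ : G) * g) :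
    ∃ 𝒱 ∈ nhds (fun γ : Γ => (γ : G)),
      ∀ r : Γ →* G, ⇑r ∈ 𝒱 → ∃ g : G, ∀ γ : Γ, r γ = g⁻¹ * (γ : G) * g := by
  obtain ⟨𝒰, h𝒰, hrigid⟩ := hΔrigid
  have hrestrict : Continuous fun (f : Γ → G) (δ : Δ) => f (Subgroup.inclusion hΔΓ δ) := by
    fun_prop
  refine ⟨_, hrestrict.continuousAt.preimage_mem_nhds h𝒰, fun r hr => ?_⟩
  obtain ⟨g, hg⟩ := hrigid (r.comp (Subgroup.inclusion hΔΓ)) hr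
  have hψ := Subgroup.apply_eq_of_apply_inclusion_eq hΔΓ hnorm hcent
    (ψ := (MulAut.conj g).toMonoidHom.comp r) fun δ => by
      simp only [MonoidHom.comp_apply, MulEquiv.coe_toMonoidHom, MulAut.conj_apply]
      rw [← MonoidHom.comp_apply, hg]
      group
  refine ⟨g, fun γ => ?_⟩
  rw [← hψ γ]
  simp [mul_assoc]

/-- Local rigidity passes from a finite-index normal subgroup `Δ ◁ Γ` with trivial
centralizer in `G` to the finitely generated discrete subgroup `Γ` itself:
if every homomorphism `Δ → G` close enough (pointwise) to the inclusion is a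
conjugation, then the same holds for homomorphisms `Γ → G`. -/
theorem local_rigidity_of_finite_index_normal {G : Type*} [Group G] [TopologicalSpace G]
    [IsTopologicalGroup G] (Γ Δ : Subgroup G) [DiscreteTopology Γ] (hFG : Group.FG Γ)
    (hΔΓ : Δ ≤ Γ) (hnorm : ∀ γ ∈ Γ, ∀ δ ∈ Δ, γ * δ * γ⁻¹ ∈ Δ)
    (hfi : (Δ.subgroupOf Γ).index ≠ 0)
    (hcent : Subgroup.centralizer (Δ : Set G) = ⊥)
    (hΔrigid : ∃ 𝒰 ∈ nhds (fun δ : Δ => (δ : G)),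
      ∀ r : Δ →* G, ⇑r ∈ 𝒰 → ∃ g : G, ∀ δ : Δ, r δ = g⁻¹ * (δ : G) * g) :
    ∃ 𝒱 ∈ nhds (fun γ : Γ => (γ : G)),
      ∀ r : Γ →* G, ⇑r ∈ 𝒱 → ∃ g : G, ∀ γ : Γ, r γ = g⁻¹ * (γ : G) * g :=
  local_rigidity_of_finite_index_normal_general Γ Δ hΔΓ hnorm hcent hΔrigid
end

section
/- Let G be a locally compact group, Γ a uniform lattice in G (discrete with G = ΓK for some compact K), and p : G̃ → G a continuous open surjective homomorphism of locally compact groups with discrete kernel N. Then Γ̃ = p⁻¹(Γ) is a uniform lattice in G̃. -/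
/-!
The fibres of `p` are translates of the discrete kernel, so `p` is a continuous map with discrete
fibres and the preimage of the discrete set `Γ` is discrete. For cocompactness, finitely many
images of relatively compact open sets of `G̃` cover `K`, so `K ⊆ p(K̃)` for a compact `K̃`;
lifting `g = γk` with `k = p(k̃)` gives `g = (g k̃⁻¹) k̃` with `p(g k̃⁻¹) = γ`.
-/

open Pointwise Set

theorem IsOpenMap.exists_isCompact_subset_image {X Y : Type*} [TopologicalSpace X]
    [TopologicalSpace Y] [WeaklyLocallyCompactSpace X] {f : X → Y} (hf : IsOpenMap f)
    {K : Set Y} (hK : IsCompact K) (hKf : K ⊆ range f) :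
    ∃ L : Set X, IsCompact L ∧ K ⊆ f '' L := by
  choose C hCc hC using fun x : X => exists_compact_mem_nhds x
  have hcover : K ⊆ ⋃ x, f '' interior (C x) := by
    rintro y hy
    obtain ⟨x, rfl⟩ := hKf hy
    exact mem_iUnion.2 ⟨x, mem_image_of_mem f (mem_interior_iff_mem_nhds.2 (hC x))⟩
  obtain ⟨t, ht⟩ := hK.elim_finite_subcover _ (fun x => hf _ isOpen_interior) hcover
  refine ⟨⋃ x ∈ t, C x, t.isCompact_biUnion fun x _ => hCc x, ht.trans ?_⟩
  rw [image_iUnion₂]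
  exact iUnion₂_mono fun x _ => image_mono interior_subset

namespace MonoidHom

variable {G H : Type*} [Group G] [Group H]

theorem isDiscrete_preimage_singleton [TopologicalSpace G] [ContinuousMul G] (f : G →* H)
    (hker : IsDiscrete (f.ker : Set G)) (y : H) : IsDiscrete (f ⁻¹' {y}) := by
  by_cases hy : y ∈ range f
  · obtain ⟨x, rfl⟩ := hy
    have hfiber : f ⁻¹' {f x} = (x⁻¹ * ·) ⁻¹' f.ker := by
      ext z
      simp only [mem_preimage, mem_singleton_iff, SetLike.mem_coe, mem_ker, map_mul, map_inv,
        inv_mul_eq_one]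
      exact eq_comm
    rw [hfiber]
    exact hker.preimage (continuous_const_mul _).continuousOn (mul_right_injective _)
  · rw [preimage_singleton_eq_empty.2 hy]
    exact subsingleton_empty.isDiscrete

theorem discreteTopology_comap [TopologicalSpace G] [ContinuousMul G] [TopologicalSpace H]
    (f : G →* H) (hf : Continuous f) [DiscreteTopology f.ker] (S : Subgroup H)
    [DiscreteTopology S] : DiscreteTopology (S.comap f) := by
  have hS : IsDiscrete (S : Set H) := SetLike.isDiscrete_iff_discreteTopology.2 ‹_›
  have hker : IsDiscrete (f.ker : Set G) := SetLike.isDiscrete_iff_discreteTopology.2 ‹_›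
  exact SetLike.isDiscrete_iff_discreteTopology.1 <|
    hS.preimage' hf.continuousOn (f.isDiscrete_preimage_singleton hker)

theorem comap_mul_eq_univ (f : G →* H) {S : Subgroup H} {K : Set H} {L : Set G}
    (hSK : (S : Set H) * K = univ) (hKL : K ⊆ f '' L) :
    ((S.comap f : Subgroup G) : Set G) * L = univ := by
  refine eq_univ_of_forall fun g => ?_
  obtain ⟨γ, hγ, k, hk, hγk⟩ := hSK.symm ▸ mem_univ (f g)
  obtain ⟨l, hl, rfl⟩ := hKL hk
  refine ⟨g * l⁻¹, ?_, l, hl, inv_mul_cancel_right g l⟩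
  simpa [← hγk] using hγ

end MonoidHom

theorem preimage_uniform_lattice_general {Gt G : Type*} [Group Gt] [TopologicalSpace Gt]
    [IsTopologicalGroup Gt] [LocallyCompactSpace Gt] [Group G] [TopologicalSpace G]
    (p : Gt →* G) (hpc : Continuous p) (hpo : IsOpenMap p) (hps : Function.Surjective p)
    [DiscreteTopology p.ker]
    (Γ : Subgroup G) [DiscreteTopology Γ]
    (K : Set G) (hK : IsCompact K) (hΓK : (Γ : Set G) * K = Set.univ) :
    DiscreteTopology (Γ.comap p) ∧
      ∃ Kt : Set Gt, IsCompact Kt ∧ ((Γ.comap p : Subgroup Gt) : Set Gt) * Kt = Set.univ := by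
  obtain ⟨Kt, hKt, hKKt⟩ := hpo.exists_isCompact_subset_image hK (hps.range_eq ▸ subset_univ K)
  exact ⟨p.discreteTopology_comap hpc Γ, Kt, hKt, p.comap_mul_eq_univ hΓK hKKt⟩

/-- If `Γ` is a uniform lattice in the locally compact group `G` and `p : G̃ → G` is a
continuous open surjective homomorphism of locally compact groups with discrete kernel,
then `p⁻¹(Γ)` is a uniform lattice in `G̃`. -/
theorem preimage_uniform_lattice {Gt G : Type*} [Group Gt] [TopologicalSpace Gt]
    [IsTopologicalGroup Gt] [LocallyCompactSpace Gt] [Group G] [TopologicalSpace G]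
    [IsTopologicalGroup G] [LocallyCompactSpace G]
    (p : Gt →* G) (hpc : Continuous p) (hpo : IsOpenMap p) (hps : Function.Surjective p)
    [DiscreteTopology p.ker]
    (Γ : Subgroup G) [DiscreteTopology Γ]
    (K : Set G) (hK : IsCompact K) (hΓK : (Γ : Set G) * K = Set.univ) :
    DiscreteTopology (Γ.comap p) ∧
      ∃ Kt : Set Gt, IsCompact Kt ∧ ((Γ.comap p : Subgroup Gt) : Set Gt) * Kt = Set.univ :=
  preimage_uniform_lattice_general p hpc hpo hps Γ K hK hΓK
end

section
/- Let G be a locally compact group, Γ ≤ G a discrete subgroup, and U a symmetric relatively compact open identity neighborhood with Γ ∩ U = {e}. Let W be an open symmetric identity neighborhood with W·W ⊆ U. Then any closed subgroup H ≤ G satisfying H ∩ (cl(U) \ W) = ∅ has the property that H ∩ U is a subgroup of G. -/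
open Pointwise

theorem Set.inter_subset_of_inter_closure_diff_eq_empty {X : Type*} [TopologicalSpace X]
    {S U W : Set X} (h : S ∩ (closure U \ W) = ∅) : S ∩ U ⊆ W := by
  rintro x ⟨hxS, hxU⟩
  by_contra hxW
  exact Set.eq_empty_iff_forall_notMem.mp h x ⟨hxS, subset_closure hxU, hxW⟩

def Subgroup.interOfMulSelfSubset {G : Type*} [Group G] (H : Subgroup G) {U W : Set G}
    (hU1 : (1 : G) ∈ U) (hUsymm : U⁻¹ = U) (hHUW : (H : Set G) ∩ U ⊆ W) (hWU : W * W ⊆ U) :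
    Subgroup G where
  carrier := (H : Set G) ∩ U
  one_mem' := ⟨H.one_mem, hU1⟩
  inv_mem' hx := ⟨H.inv_mem hx.1, hUsymm ▸ Set.inv_mem_inv.mpr hx.2⟩
  mul_mem' ha hb := ⟨H.mul_mem ha.1 hb.1, hWU (Set.mul_mem_mul (hHUW ha) (hHUW hb))⟩

theorem inter_bubble_is_subgroup_general {G : Type*} [Group G] [TopologicalSpace G]
    (U : Set G) (hUsymm : U⁻¹ = U) (hU1 : (1 : G) ∈ U)
    (W : Set G)
    (hWU : W * W ⊆ U)
    (H : Subgroup G)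
    (hHavoid : (H : Set G) ∩ (closure U \ W) = ∅) :
    ∃ S : Subgroup G, (S : Set G) = (H : Set G) ∩ U :=
  ⟨H.interOfMulSelfSubset hU1 hUsymm (Set.inter_subset_of_inter_closure_diff_eq_empty hHavoid) hWU,
    rfl⟩

/-- Let `U` be a symmetric relatively compact open identity neighborhood meeting the
discrete subgroup `Γ` only at the identity, and `W` an open symmetric identity
neighborhood with `W·W ⊆ U`. Then any closed subgroup `H` avoiding `cl(U) \ W`
has the property that `H ∩ U` is a subgroup. -/
theorem inter_bubble_is_subgroup {G : Type*} [Group G] [TopologicalSpace G]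
    [IsTopologicalGroup G] [LocallyCompactSpace G]
    (Γ : Subgroup G) [DiscreteTopology Γ]
    (U : Set G) (hUo : IsOpen U) (hUsymm : U⁻¹ = U) (hU1 : (1 : G) ∈ U)
    (hUrc : IsCompact (closure U)) (hΓU : (Γ : Set G) ∩ U = {1})
    (W : Set G) (hWo : IsOpen W) (hWsymm : W⁻¹ = W) (hW1 : (1 : G) ∈ W)
    (hWU : W * W ⊆ U)
    (H : Subgroup G) (hHclosed : IsClosed (H : Set G))
    (hHavoid : (H : Set G) ∩ (closure U \ W) = ∅) :
    ∃ S : Subgroup G, (S : Set G) = (H : Set G) ∩ U :=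
  inter_bubble_is_subgroup_general U hUsymm hU1 W hWU H hHavoid
end
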